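/- Let M be a conical refinement commutative Γ-monoid. Suppose I = I₁ ⊕ ... ⊕ I_m and J = J₁ ⊕ ... ⊕ J_n are both essential Γ-order ideals of M, where all I_k and J_l are uniform Γ-order ideals. Then m = n. -/

import Mathlib

/-!
Send each `J l` to an index `k` with `I k ∩ J l ≠ {0}`: such a `k` exists because `J l` meets
the essential ideal `∑ I k` in a nonzero element, and any nonzero element of that sum lies
above a nonzero element of some `I k`. If two summands `J l ≠ J l'` were sent to the same `k`,
uniformity of `I k` would make `I k ∩ J l` and `I k ∩ J l'` intersect nontrivially, contradicting
the directness of `⊕ J l`. Hence `n ≤ m`, and `m ≤ n` by symmetry.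
-/

/-- A commutative monoid is conical if `a + b = 0` implies `a = 0` and `b = 0`. -/
def IsConical (M : Type*) [AddCommMonoid M] : Prop :=
  ∀ a b : M, a + b = 0 → a = 0 ∧ b = 0

/-- The refinement property for a commutative monoid. -/
def IsRefinement (M : Type*) [AddCommMonoid M] : Prop :=
  ∀ a₀ a₁ b₀ b₁ : M, a₀ + a₁ = b₀ + b₁ →
    ∃ c₀₀ c₀₁ c₁₀ c₁₁ : M,
      a₀ = c₀₀ + c₀₁ ∧ a₁ = c₁₀ + c₁₁ ∧ b₀ = c₀₀ + c₁₀ ∧ b₁ = c₀₁ + c₁₁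

variable {M : Type*} [AddCommMonoid M]

/-- The algebraic preorder: `a ≤ b` iff `b = a + c` for some `c`. -/
def AlgLE (a b : M) : Prop := ∃ c, b = a + c

/-- Strict algebraic order: `a < b` iff `b = a + c` for some nonzero `c`. -/
def AlgLT (a b : M) : Prop := ∃ c, c ≠ 0 ∧ b = a + c

/-- Two elements are comparable if they are equal or one is strictly below the other. -/
def CmpRel (a b : M) : Prop := a = b ∨ AlgLT a b ∨ AlgLT b a

/-- `a ∥ I` : `a` is incomparable with every nonzero element of `I`. -/
def PerpTo (a : M) (I : Set M) : Prop := ∀ x ∈ I, x ≠ 0 → ¬ CmpRel a x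

/-- An order ideal: a submonoid which is downward closed for the algebraic preorder. -/
def IsOrderIdeal (I : Set M) : Prop :=
  (0 : M) ∈ I ∧ (∀ a b : M, a ∈ I → b ∈ I → a + b ∈ I) ∧
    ∀ a b : M, b ∈ I → AlgLE a b → a ∈ I

/-- The orthogonal set `I^⊥ = {a | a ∥ I} ∪ {0}`. -/
def perpSet (I : Set M) : Set M := {a : M | a = 0 ∨ PerpTo a I}

variable (Γ : Type*) [CommGroup Γ] [DistribMulAction Γ M]

/-- A Γ-order ideal: an order ideal invariant under the action of Γ. -/
def IsGammaOrderIdeal (I : Set M) : Prop :=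
  IsOrderIdeal I ∧ ∀ (g : Γ) (a : M), a ∈ I → g • a ∈ I

/-- An essential Γ-order ideal: meets every nonzero Γ-order ideal nontrivially. -/
def IsEssential (I : Set M) : Prop :=
  IsGammaOrderIdeal Γ I ∧
    ∀ J : Set M, IsGammaOrderIdeal Γ J → J ≠ {0} → I ∩ J ≠ {0}

/-- A uniform Γ-order ideal: nonzero, and any two nonzero Γ-order ideals
contained in it intersect nontrivially. -/
def IsUniform (I : Set M) : Prop :=
  IsGammaOrderIdeal Γ I ∧ I ≠ {0} ∧
    ∀ J K : Set M, IsGammaOrderIdeal Γ J → IsGammaOrderIdeal Γ K →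
      J ⊆ I → K ⊆ I → J ≠ {0} → K ≠ {0} → J ∩ K ≠ {0}

lemma AlgLE.trans {a b c : M} (hab : AlgLE a b) (hbc : AlgLE b c) : AlgLE a c := by
  obtain ⟨d, rfl⟩ := hab
  obtain ⟨e, rfl⟩ := hbc
  exact ⟨d + e, add_assoc a d e⟩

lemma exists_ne_zero_algLE_of_mem_closure_iUnion {ι : Type*} {I : ι → Set M} {a : M}
    (ha : a ∈ AddSubmonoid.closure (⋃ i, I i)) (ha0 : a ≠ 0) :
    ∃ i, ∃ x ∈ I i, x ≠ 0 ∧ AlgLE x a := by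
  induction ha using AddSubmonoid.closure_induction with
  | mem y hy =>
      obtain ⟨i, hi⟩ := Set.mem_iUnion.mp hy
      exact ⟨i, y, hi, ha0, 0, (add_zero y).symm⟩
  | zero => exact absurd rfl ha0
  | add b c _ _ hb hc =>
      by_cases hb0 : b = 0
      · subst hb0
        obtain ⟨i, x, hx, hx0, hxc⟩ := hc (by simpa using ha0)
        exact ⟨i, x, hx, hx0, by simpa using hxc⟩
      · obtain ⟨i, x, hx, hx0, hxb⟩ := hb hb0
        exact ⟨i, x, hx, hx0, hxb.trans ⟨c, rfl⟩⟩

lemma pairwise_inter_subset_zero_of_inter_closure_eq {ι : Type*} {I : ι → Set M}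
    (hdir : ∀ t, I t ∩
      ((AddSubmonoid.closure (⋃ s, ⋃ (_ : s ≠ t), I s) : AddSubmonoid M) : Set M) = {0}) :
    Pairwise fun t s => I t ∩ I s ⊆ {0} := by
  intro t s hts
  rw [← hdir t]
  exact Set.inter_subset_inter_right _ fun x hx =>
    AddSubmonoid.subset_closure (Set.mem_biUnion (Ne.symm hts) hx)

lemma exists_ne_zero_of_ne_singleton_zero {S : Set M} (h : S ≠ {0}) (h0 : (0 : M) ∈ S) :
    ∃ x ∈ S, x ≠ 0 :=
  ((Set.nontrivial_iff_ne_singleton h0).mpr h).exists_ne 0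

lemma ne_singleton_zero_of_mem {S : Set M} {x : M} (hx : x ∈ S) (hx0 : x ≠ 0) : S ≠ {0} :=
  fun h => hx0 (by rwa [h] at hx)

variable {Γ}

lemma IsGammaOrderIdeal.inter {I J : Set M} (hI : IsGammaOrderIdeal Γ I)
    (hJ : IsGammaOrderIdeal Γ J) : IsGammaOrderIdeal Γ (I ∩ J) := by
  obtain ⟨⟨hI0, hIadd, hIdown⟩, hIg⟩ := hI
  obtain ⟨⟨hJ0, hJadd, hJdown⟩, hJg⟩ := hJ
  refine ⟨⟨⟨hI0, hJ0⟩, ?_, ?_⟩, ?_⟩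
  · exact fun a b ha hb => ⟨hIadd a b ha.1 hb.1, hJadd a b ha.2 hb.2⟩
  · exact fun a b hb hab => ⟨hIdown a b hb.1 hab, hJdown a b hb.2 hab⟩
  · exact fun g a ha => ⟨hIg g a ha.1, hJg g a ha.2⟩

lemma IsUniform.exists_ne_zero_mem_inter {U A B : Set M} (hU : IsUniform Γ U)
    (hA : IsGammaOrderIdeal Γ A) (hB : IsGammaOrderIdeal Γ B)
    (hUA : ∃ x ∈ U ∩ A, x ≠ 0) (hUB : ∃ x ∈ U ∩ B, x ≠ 0) : ∃ x ∈ A ∩ B, x ≠ 0 := by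
  obtain ⟨hUideal, -, hUunif⟩ := hU
  obtain ⟨a, ha, ha0⟩ := hUA
  obtain ⟨b, hb, hb0⟩ := hUB
  have hmeet := hUunif (U ∩ A) (U ∩ B) (hUideal.inter hA) (hUideal.inter hB)
    Set.inter_subset_left Set.inter_subset_left
    (ne_singleton_zero_of_mem ha ha0) (ne_singleton_zero_of_mem hb hb0)
  obtain ⟨x, ⟨⟨-, hxA⟩, -, hxB⟩, hx0⟩ := exists_ne_zero_of_ne_singleton_zero hmeet
    ⟨⟨hUideal.1.1, hA.1.1⟩, hUideal.1.1, hB.1.1⟩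
  exact ⟨x, ⟨hxA, hxB⟩, hx0⟩

lemma IsEssential.exists_ne_zero_mem_inter_of_closure_iUnion {ι : Type*} {I : ι → Set M}
    (hIe : IsEssential Γ ((AddSubmonoid.closure (⋃ i, I i) : AddSubmonoid M) : Set M))
    {J : Set M} (hJ : IsGammaOrderIdeal Γ J) (hJ0 : J ≠ {0}) :
    ∃ i, ∃ x ∈ I i ∩ J, x ≠ 0 := by
  obtain ⟨a, ⟨haI, haJ⟩, ha0⟩ := exists_ne_zero_of_ne_singleton_zero
    (hIe.2 J hJ hJ0) ⟨(AddSubmonoid.closure (⋃ i, I i)).zero_mem, hJ.1.1⟩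
  obtain ⟨i, x, hxI, hx0, hxa⟩ := exists_ne_zero_algLE_of_mem_closure_iUnion haI ha0
  exact ⟨i, x, ⟨hxI, hJ.1.2.2 x a haJ hxa⟩, hx0⟩

lemma exists_injective_of_isEssential_closure_iUnion {ι κ : Type*} {I : ι → Set M}
    {J : κ → Set M} (hIu : ∀ i, IsUniform Γ (I i))
    (hIe : IsEssential Γ ((AddSubmonoid.closure (⋃ i, I i) : AddSubmonoid M) : Set M))
    (hJ : ∀ j, IsGammaOrderIdeal Γ (J j)) (hJ0 : ∀ j, J j ≠ {0})
    (hJdisj : Pairwise fun j j' => J j ∩ J j' ⊆ {0}) :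
    ∃ f : κ → ι, Function.Injective f := by
  choose f hf using fun j => hIe.exists_ne_zero_mem_inter_of_closure_iUnion (hJ j) (hJ0 j)
  refine ⟨f, fun j j' hjj' => by_contra fun hne => ?_⟩
  obtain ⟨x, hx, hx0⟩ := (hIu (f j)).exists_ne_zero_mem_inter (hJ j) (hJ j') (hf j)
    (hjj' ▸ hf j')
  exact hx0 (hJdisj hne hx)

theorem stmt_7_general {M : Type*} [AddCommMonoid M] (Γ : Type*) [CommGroup Γ]
    [DistribMulAction Γ M]
    {m n : ℕ} (I : Fin m → Set M) (J : Fin n → Set M)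
    (hIu : ∀ k, IsUniform Γ (I k)) (hJu : ∀ l, IsUniform Γ (J l))
    (hIdir : ∀ t, I t ∩
      ((AddSubmonoid.closure (⋃ s, ⋃ (_ : s ≠ t), I s) : AddSubmonoid M) : Set M) = {0})
    (hJdir : ∀ t, J t ∩
      ((AddSubmonoid.closure (⋃ s, ⋃ (_ : s ≠ t), J s) : AddSubmonoid M) : Set M) = {0})
    (hIe : IsEssential Γ ((AddSubmonoid.closure (⋃ k, I k) : AddSubmonoid M) : Set M))
    (hJe : IsEssential Γ ((AddSubmonoid.closure (⋃ l, J l) : AddSubmonoid M) : Set M)) :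
    m = n := by
  obtain ⟨f, hf⟩ := exists_injective_of_isEssential_closure_iUnion hJu hJe
    (fun k => (hIu k).1) (fun k => (hIu k).2.1)
    (pairwise_inter_subset_zero_of_inter_closure_eq hIdir)
  obtain ⟨g, hg⟩ := exists_injective_of_isEssential_closure_iUnion hIu hIe
    (fun l => (hJu l).1) (fun l => (hJu l).2.1)
    (pairwise_inter_subset_zero_of_inter_closure_eq hJdir)
  exact le_antisymm (Fin.le_of_injective f hf) (Fin.le_of_injective g hg)

theorem stmt_7 {M : Type*} [AddCommMonoid M] (Γ : Type*) [CommGroup Γ]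
    [DistribMulAction Γ M]
    (hcon : IsConical M) (href : IsRefinement M)
    {m n : ℕ} (I : Fin m → Set M) (J : Fin n → Set M)
    (hIu : ∀ k, IsUniform Γ (I k)) (hJu : ∀ l, IsUniform Γ (J l))
    (hIdir : ∀ t, I t ∩
      ((AddSubmonoid.closure (⋃ s, ⋃ (_ : s ≠ t), I s) : AddSubmonoid M) : Set M) = {0})
    (hJdir : ∀ t, J t ∩
      ((AddSubmonoid.closure (⋃ s, ⋃ (_ : s ≠ t), J s) : AddSubmonoid M) : Set M) = {0})
    (hIe : IsEssential Γ ((AddSubmonoid.closure (⋃ k, I k) : AddSubmonoid M) : Set M))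
    (hJe : IsEssential Γ ((AddSubmonoid.closure (⋃ l, J l) : AddSubmonoid M) : Set M)) :
    m = n :=
  stmt_7_general Γ I J hIu hJu hIdir hJdir hIe hJe
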